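/- arXiv:0710.0491 — 4 statements merged into one kernel-verified Lean document; each statement's English description precedes it below -/
import Mathlib

section
/- Let d ≥ 1, let f : [0,1]^d → ℝ be bounded, and let u : [0,1]^d → ℝ be continuous on [0,1]^d, twice continuously differentiable on the open cube (0,1)^d, satisfy Δu(x) = Σ_{i=1}^d ∂_i²u(x) = f(x) for all x ∈ (0,1)^d, and vanish on the boundary ∂[0,1]^d. Then sup_{x∈[0,1]^d} |u(x)| ≤ (1/8)·sup_{x∈(0,1)^d} |f(x)|. -/
/-- Partial derivative of `u` in direction `i` (one-sided within `[0,1]` at the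
boundary): `∂ᵢu(x) = d/dt u(x₁,…,t,…,x_d)|_{t = xᵢ}` taken within `[0,1]`. -/
noncomputable def pd (d : ℕ) (i : Fin d) (u : (Fin d → ℝ) → ℝ) : (Fin d → ℝ) → ℝ :=
  fun x => derivWithin (fun t => u (Function.update x i t)) (Set.Icc 0 1) (x i)

/-- Mixed partial derivative `D^α u = ∂₁^{α₁} ⋯ ∂_d^{α_d} u`. -/
noncomputable def mderiv (d : ℕ) (α : Fin d → ℕ) (u : (Fin d → ℝ) → ℝ) :
    (Fin d → ℝ) → ℝ :=
  (List.finRange d).foldr (fun i v => (pd d i)^[α i] v) u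

/-- The closed unit cube `[0,1]^d`. -/
def unitCube (d : ℕ) : Set (Fin d → ℝ) := Set.Icc 0 1

/-- The open unit cube `(0,1)^d`. -/
def openCube (d : ℕ) : Set (Fin d → ℝ) := Set.pi Set.univ fun _ => Set.Ioo (0 : ℝ) 1

/-- The boundary `∂[0,1]^d`. -/
def cubeBdry (d : ℕ) : Set (Fin d → ℝ) := {x ∈ unitCube d | ∃ i, x i = 0 ∨ x i = 1}

/-- All mixed partial derivatives `D^β f`, `β ≤ α`, exist on `s` (each step of the
iterated differentiation is differentiable within `[0,1]` in its direction). -/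
def HasDerivsOn (d : ℕ) (α : Fin d → ℕ) (f : (Fin d → ℝ) → ℝ)
    (s : Set (Fin d → ℝ)) : Prop :=
  ∀ β : Fin d → ℕ, (∀ i, β i ≤ α i) → ∀ i : Fin d, β i < α i → ∀ x ∈ s,
    DifferentiableWithinAt ℝ (fun t => mderiv d β f (Function.update x i t))
      (Set.Icc 0 1) (x i)

/-- `u ∈ X_k^d`: all mixed derivatives `D^α u`, `α ∈ {0,…,k}^d`, exist, are
continuous on `[0,1]^d` and vanish on the boundary. -/
def MemX (d k : ℕ) (u : (Fin d → ℝ) → ℝ) : Prop :=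
  HasDerivsOn d (fun _ => k) u (unitCube d) ∧
  ∀ α : Fin d → ℕ, (∀ i, α i ≤ k) →
    ContinuousOn (mderiv d α u) (unitCube d) ∧
    ∀ x ∈ cubeBdry d, mderiv d α u x = 0

/-- `u ∈ X_k^d(K)`: additionally all these derivatives are bounded by `K`. -/
def MemXb (d k : ℕ) (K : ℝ) (u : (Fin d → ℝ) → ℝ) : Prop :=
  MemX d k u ∧
  ∀ α : Fin d → ℕ, (∀ i, α i ≤ k) → ∀ x ∈ unitCube d, |mderiv d α u x| ≤ K

/-- Mesh size `h_k = 2^{-lvl_k}` attached to a level vector. -/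
noncomputable def hmesh (d : ℕ) (lvl : Fin d → ℕ) (k : Fin d) : ℝ := ((2 : ℝ) ^ lvl k)⁻¹

/-- The grid point with index `i` on the grid of level `lvl`. -/
noncomputable def gridpt (d : ℕ) (lvl : Fin d → ℕ) (i : Fin d → ℕ) : Fin d → ℝ :=
  fun k => (i k : ℝ) * hmesh d lvl k

/-- Valid grid indices: `0 ≤ i_k ≤ 2^{lvl_k}`. -/
def IsGridIdx (d : ℕ) (lvl : Fin d → ℕ) (i : Fin d → ℕ) : Prop := ∀ k, i k ≤ 2 ^ lvl k

/-- The hyperplane set `I^{(J)} = {x ∈ [0,1]^d : x_j/h_j ∈ ℤ for j ∈ J}`. -/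
def Iplane (d : ℕ) (J : Finset (Fin d)) (lvl : Fin d → ℕ) : Set (Fin d → ℝ) :=
  {x ∈ unitCube d | ∀ j ∈ J, ∃ m : ℤ, x j = (m : ℝ) * hmesh d lvl j}

/-- `U` is the central finite difference solution of the Poisson problem `Δu = f`
with zero Dirichlet data on the grid of level `lvl`. -/
def IsFDPoisson (d : ℕ) (lvl : Fin d → ℕ) (f : (Fin d → ℝ) → ℝ)
    (U : (Fin d → ℕ) → ℝ) : Prop :=
  (∀ i : Fin d → ℕ, IsGridIdx d lvl i → (∃ k, i k = 0 ∨ i k = 2 ^ lvl k) → U i = 0) ∧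
  (∀ i : Fin d → ℕ, (∀ k, 1 ≤ i k ∧ i k < 2 ^ lvl k) →
    ∑ k, (U (Function.update i k (i k + 1)) - 2 * U i + U (Function.update i k (i k - 1)))
        / hmesh d lvl k ^ 2
      = f (gridpt d lvl i))

/-- `U` is the upwind (implicit Euler) solution of the advection equation
`Σᵢ ∂ᵢu = 0` on the grid of level `lvl`, with inflow data given by `u`. -/
def IsUpwindSol (d : ℕ) (lvl : Fin d → ℕ) (u : (Fin d → ℝ) → ℝ)
    (U : (Fin d → ℕ) → ℝ) : Prop :=
  (∀ i : Fin d → ℕ, IsGridIdx d lvl i → (∃ k, i k = 0) → U i = u (gridpt d lvl i)) ∧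
  (∀ i : Fin d → ℕ, IsGridIdx d lvl i → (∀ k, 1 ≤ i k) →
    ∑ k, (U i - U (Function.update i k (i k - 1))) / hmesh d lvl k = 0)

/-- `g` is the multilinear interpolant of the grid function `U` on the grid of
level `lvl`: it agrees with `U` at all grid points and is a polynomial of degree
at most `1` in each variable on each grid cell. -/
def IsInterp (d : ℕ) (lvl : Fin d → ℕ) (U : (Fin d → ℕ) → ℝ)
    (g : (Fin d → ℝ) → ℝ) : Prop :=
  (∀ i : Fin d → ℕ, IsGridIdx d lvl i → g (gridpt d lvl i) = U i) ∧
  (∀ j : Fin d → ℕ, (∀ k, j k < 2 ^ lvl k) →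
    ∃ c : Finset (Fin d) → ℝ, ∀ x : Fin d → ℝ,
      (∀ k, (j k : ℝ) * hmesh d lvl k ≤ x k ∧ x k ≤ ((j k : ℝ) + 1) * hmesh d lvl k) →
      g x = ∑ T : Finset (Fin d), c T * ∏ k ∈ T, x k)

/-- The domain `{x : x ± h e_k ∈ [0,1]^d}` of the truncation error terms. -/
def diffDom (d : ℕ) (k : Fin d) (h : ℝ) : Set (Fin d → ℝ) :=
  {x | Function.update x k (x k + h) ∈ unitCube d ∧
       Function.update x k (x k - h) ∈ unitCube d}

/-!
Maximum principle with a barrier. For `ε > 0` put `c = M / 2 + ε` and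
`w = u + c · x₀ (1 - x₀)`, so that `Δw = f - 2c ≤ -2ε < 0` in the open cube. At an interior
minimum every second partial derivative of `w` would be nonnegative, so `w` attains its minimum
on the boundary, where `w ≥ 0`. Since `x₀ (1 - x₀) ≤ 1/4`, this gives `u ≥ -c/4`, and letting
`ε → 0`, `u ≥ -M/8`. Applying this to `-u` gives the upper bound.
-/

open Set Filter Topology

theorem IsLocalMin.deriv_deriv_nonneg {φ : ℝ → ℝ} {a : ℝ} (hmin : IsLocalMin φ a)
    (hc : ContinuousAt φ a) : 0 ≤ deriv (deriv φ) a := by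
  by_contra! hneg
  -- by the second derivative test `a` would also be a local maximum, so `φ` is locally constant
  have hmax := isLocalMax_of_deriv_deriv_neg hneg hmin.deriv_eq_zero hc
  have hconst : φ =ᶠ[𝓝 a] fun _ => φ a :=
    (hmin.and hmax).mono fun _ ht => le_antisymm ht.2 ht.1
  have hderiv : deriv φ =ᶠ[𝓝 a] fun _ => 0 :=
    hconst.eventuallyEq_nhds.mono fun _ ht => by rw [ht.deriv_eq, deriv_const]
  rw [hderiv.deriv_eq, deriv_const] at hneg
  exact hneg.false

theorem deriv_deriv_add {f g : ℝ → ℝ} {a : ℝ} (hf : ContDiffAt ℝ 2 f a)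
    (hg : ContDiffAt ℝ 2 g a) :
    deriv (deriv (f + g)) a = deriv (deriv f) a + deriv (deriv g) a := by
  simpa only [iteratedDeriv_succ', iteratedDeriv_zero] using iteratedDeriv_add hf hg

section Cube

variable {d : ℕ}

theorem isOpen_openCube (d : ℕ) : IsOpen (openCube d) :=
  isOpen_set_pi finite_univ fun _ _ => isOpen_Ioo

theorem isCompact_unitCube (d : ℕ) : IsCompact (unitCube d) :=
  isCompact_Icc

theorem mem_unitCube_iff {x : Fin d → ℝ} : x ∈ unitCube d ↔ ∀ i, x i ∈ Icc (0 : ℝ) 1 := by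
  simp [unitCube, Pi.le_def, forall_and]

theorem unitCube_mem_nhds {x : Fin d → ℝ} (hx : x ∈ openCube d) : unitCube d ∈ 𝓝 x :=
  mem_of_superset ((isOpen_openCube d).mem_nhds hx) fun _ hy =>
    mem_unitCube_iff.2 fun i => Ioo_subset_Icc_self (hy i (mem_univ i))

theorem mem_openCube_of_notMem_cubeBdry {x : Fin d → ℝ} (hx : x ∈ unitCube d)
    (hxb : x ∉ cubeBdry d) : x ∈ openCube d := by
  intro i _
  have hi := mem_unitCube_iff.1 hx i
  have hne : x i ≠ 0 ∧ x i ≠ 1 := not_or.1 fun h => hxb ⟨hx, i, h⟩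
  exact ⟨hi.1.lt_of_ne' hne.1, hi.2.lt_of_ne hne.2⟩

end Cube

section PartialDerivatives

variable {d : ℕ}

theorem pd_pd_eq_deriv_deriv (u : (Fin d → ℝ) → ℝ) (i : Fin d) {z : Fin d → ℝ}
    (hz : z i ∈ Ioo (0 : ℝ) 1) :
    pd d i (pd d i u) z = deriv (deriv fun t => u (Function.update z i t)) (z i) := by
  have hline : (fun t => pd d i u (Function.update z i t))
      = derivWithin (fun t => u (Function.update z i t)) (Icc 0 1) := by
    funext t
    simp only [pd, Function.update_idem, Function.update_self]
  change derivWithin (fun t => pd d i u (Function.update z i t)) (Icc 0 1) (z i) = _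
  rw [hline, derivWithin_of_mem_nhds (Icc_mem_nhds hz.1 hz.2)]
  refine Filter.EventuallyEq.deriv_eq ?_
  filter_upwards [isOpen_Ioo.mem_nhds hz] with t ht
  exact derivWithin_of_mem_nhds (Icc_mem_nhds ht.1 ht.2)

theorem ContDiffAt.comp_update {n : WithTop ℕ∞} {u : (Fin d → ℝ) → ℝ} {z : Fin d → ℝ}
    (hu : ContDiffAt ℝ n u z) (i : Fin d) :
    ContDiffAt ℝ n (fun t => u (Function.update z i t)) (z i) :=
  (Function.update_eq_self i z).symm ▸ hu |>.comp (z i) (contDiff_update n z i).contDiffAt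

theorem pd_pd_add {u v : (Fin d → ℝ) → ℝ} {z : Fin d → ℝ} (hu : ContDiffAt ℝ 2 u z)
    (hv : ContDiffAt ℝ 2 v z) {i : Fin d} (hz : z i ∈ Ioo (0 : ℝ) 1) :
    pd d i (pd d i (u + v)) z = pd d i (pd d i u) z + pd d i (pd d i v) z := by
  simp only [pd_pd_eq_deriv_deriv _ i hz]
  exact deriv_deriv_add (hu.comp_update i) (hv.comp_update i)

theorem pd_pd_neg (u : (Fin d → ℝ) → ℝ) {z : Fin d → ℝ} {i : Fin d}
    (hz : z i ∈ Ioo (0 : ℝ) 1) :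
    pd d i (pd d i (-u)) z = -pd d i (pd d i u) z := by
  simp only [pd_pd_eq_deriv_deriv _ i hz, Pi.neg_apply, deriv.fun_neg']

theorem pd_pd_barrier (c : ℝ) (i₀ : Fin d) {z : Fin d → ℝ} {i : Fin d}
    (hz : z i ∈ Ioo (0 : ℝ) 1) :
    pd d i (pd d i fun y => c * (y i₀ * (1 - y i₀))) z = if i = i₀ then -2 * c else 0 := by
  rw [pd_pd_eq_deriv_deriv _ i hz]
  split_ifs with h
  · subst h
    simp only [Function.update_self]
    have hderiv : deriv (fun t : ℝ => c * (t * (1 - t))) = fun t => c * (1 - 2 * t) := by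
      funext t
      have h : HasDerivAt (fun t : ℝ => c * (t * (1 - t))) (c * (1 * (1 - t) + t * (0 - 1))) t :=
        ((hasDerivAt_id' t).mul ((hasDerivAt_const t 1).sub (hasDerivAt_id' t))).const_mul c
      rw [h.deriv]
      ring
    have h2 : HasDerivAt (fun t : ℝ => c * (1 - 2 * t)) (c * (0 - 2 * 1)) (z i) :=
      ((hasDerivAt_const _ 1).sub ((hasDerivAt_id' _).const_mul 2)).const_mul c
    rw [hderiv, h2.deriv]
    ring
  · simp only [Function.update_of_ne (Ne.symm h), deriv_const', deriv_const]

theorem pd_pd_nonneg_of_isLocalMin {u : (Fin d → ℝ) → ℝ} {z : Fin d → ℝ}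
    (hmin : IsLocalMin u z) (hc : ContinuousAt u z) {i : Fin d} (hz : z i ∈ Ioo (0 : ℝ) 1) :
    0 ≤ pd d i (pd d i u) z := by
  have hline : ContinuousAt (Function.update z i) (z i) := by fun_prop
  rw [pd_pd_eq_deriv_deriv u i hz]
  refine IsLocalMin.deriv_deriv_nonneg ?_ (hc.comp_of_eq hline (Function.update_eq_self i z))
  exact IsLocalMin.comp_continuous (f := u) (by rwa [Function.update_eq_self]) hline

end PartialDerivatives

section MaximumPrinciple

variable {d : ℕ}

theorem nonneg_of_sum_pd_pd_neg {w : (Fin d → ℝ) → ℝ} (hcont : ContinuousOn w (unitCube d))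
    (hΔ : ∀ z ∈ openCube d, ∑ i, pd d i (pd d i w) z < 0)
    (hbd : ∀ z ∈ cubeBdry d, 0 ≤ w z) {x : Fin d → ℝ} (hx : x ∈ unitCube d) : 0 ≤ w x := by
  obtain ⟨z, hz, hmin⟩ := (isCompact_unitCube d).exists_isMinOn ⟨x, hx⟩ hcont
  refine (?_ : 0 ≤ w z).trans (hmin hx)
  by_cases hzb : z ∈ cubeBdry d
  · exact hbd z hzb
  · have hzo := mem_openCube_of_notMem_cubeBdry hz hzb
    have hnhds := unitCube_mem_nhds hzo
    have hsum : 0 ≤ ∑ i, pd d i (pd d i w) z := Finset.sum_nonneg fun i _ =>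
      pd_pd_nonneg_of_isLocalMin (hmin.isLocalMin hnhds) (hcont.continuousAt hnhds)
        (hzo i (mem_univ i))
    exact absurd (hΔ z hzo) hsum.not_gt

theorem neg_le_of_sum_pd_pd_le (i₀ : Fin d) {u : (Fin d → ℝ) → ℝ} {M : ℝ} (hM : 0 ≤ M)
    (hcont : ContinuousOn u (unitCube d)) (hsmooth : ContDiffOn ℝ 2 u (openCube d))
    (hΔ : ∀ z ∈ openCube d, ∑ i, pd d i (pd d i u) z ≤ M)
    (hbd : ∀ z ∈ cubeBdry d, 0 ≤ u z) {x : Fin d → ℝ} (hx : x ∈ unitCube d) :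
    -(1 / 8 * M) ≤ u x := by
  refine le_of_forall_pos_le_add fun ε hε => ?_
  set c := M / 2 + ε with hcdef
  have hc : 0 ≤ c := by positivity
  have hbarrier : ContDiff ℝ 2 fun y : Fin d → ℝ => c * (y i₀ * (1 - y i₀)) := by fun_prop
  have hw := nonneg_of_sum_pd_pd_neg (w := u + fun y => c * (y i₀ * (1 - y i₀)))
    (hcont.add hbarrier.continuous.continuousOn)
    (fun z hz => by
      have hzi : ∀ i, z i ∈ Ioo (0 : ℝ) 1 := fun i => hz i (mem_univ i)
      rw [Finset.sum_congr rfl fun i _ => pd_pd_add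
          (hsmooth.contDiffAt ((isOpen_openCube d).mem_nhds hz)) hbarrier.contDiffAt (hzi i),
        Finset.sum_add_distrib, Finset.sum_congr rfl fun i _ => pd_pd_barrier c i₀ (hzi i),
        Finset.sum_ite_eq' Finset.univ i₀, if_pos (Finset.mem_univ _)]
      linarith [hΔ z hz, hcdef])
    (fun z hz => by
      have hzi := mem_unitCube_iff.1 hz.1 i₀
      exact add_nonneg (hbd z hz) (mul_nonneg hc (mul_nonneg hzi.1 (sub_nonneg.2 hzi.2))))
    hx
  have hxq : x i₀ * (1 - x i₀) ≤ 1 / 4 := by nlinarith [sq_nonneg (x i₀ - 1 / 2)]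
  simp only [Pi.add_apply] at hw
  linarith [mul_le_mul_of_nonneg_left hxq hc]

end MaximumPrinciple

/-- Maximum principle bound for the Poisson problem (Lemma `stability`, part 1):
if `Δu = f` on `(0,1)^d` with zero boundary data, then `sup|u| ≤ (1/8)·sup|f|`. -/
theorem poisson_sup_bound (d : ℕ) (hd : 1 ≤ d) (f u : (Fin d → ℝ) → ℝ) (M : ℝ)
    (hf : ∀ x ∈ openCube d, |f x| ≤ M)
    (hcont : ContinuousOn u (unitCube d))
    (hsmooth : ContDiffOn ℝ 2 u (openCube d))
    (heq : ∀ x ∈ openCube d, ∑ i, pd d i (pd d i u) x = f x)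
    (hbd : ∀ x ∈ unitCube d, (∃ i, x i = 0 ∨ x i = 1) → u x = 0) :
    ∀ x ∈ unitCube d, |u x| ≤ (1 / 8) * M := by
  have hM : 0 ≤ M := (abs_nonneg _).trans (hf (fun _ => 1 / 2) fun _ _ => by norm_num)
  have i₀ : Fin d := ⟨0, hd⟩
  intro x hx
  refine abs_le.2 ⟨?lower, ?upper⟩
  case lower =>
    refine neg_le_of_sum_pd_pd_le i₀ hM hcont hsmooth (fun z hz => ?_)
      (fun z hz => (hbd z hz.1 hz.2).ge) hx
    exact heq z hz ▸ (le_abs_self _).trans (hf z hz)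
  case upper =>
    have hneg := neg_le_of_sum_pd_pd_le i₀ hM hcont.neg hsmooth.neg (fun z hz => ?_)
      (fun z hz => by simp [hbd z hz.1 hz.2]) hx
    · simpa using hneg
    · rw [Finset.sum_congr rfl fun i _ => pd_pd_neg u (hz i (mem_univ i)), Finset.sum_neg_distrib,
        heq z hz]
      exact (neg_le_abs _).trans (hf z hz)
end

section
/- Let d ≥ 1 and let u ∈ X_2^d. Then there is a family of functions α_J, indexed by the nonempty subsets J ⊆ {1,…,d} and by mesh sizes (h_j)_{j∈J} with 1/h_j ∈ ℕ, where α_J(·;(h_j)_{j∈J}) : [0,1]^d → ℝ satisfies ‖α_J(·;(h_j)_{j∈J})‖_∞ ≤ (4/27)^{|J|}·‖D^{β(J)} u‖_∞ with β(J) the multi-index having entries 2 for j ∈ J and 0 otherwise, such that for every mesh vector h = (h_1,…,h_d) with 1/h_k ∈ ℕ and every x ∈ [0,1]^d, u(x) − (I u)(x) = Σ_{∅≠J⊆{1,…,d}} α_J(x;(h_j)_{j∈J})·Π_{j∈J} h_j², where I u denotes the multilinear interpolant of the restriction of u to the grid with mesh h. In particular α_J depends only on the mesh sizes h_j with j ∈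 J. -/
open Function

theorem exists_hasDerivAt_eq_zero_of_three_zeros {φ φ' φ'' : ℝ → ℝ} {a x b : ℝ}
    (hax : a < x) (hxb : x < b) (hφc : ContinuousOn φ (Set.Icc a b))
    (hφ : ∀ t ∈ Set.Ioo a b, HasDerivAt φ (φ' t) t)
    (hφ' : ∀ t ∈ Set.Ioo a b, HasDerivAt φ' (φ'' t) t)
    (ha : φ a = 0) (hx : φ x = 0) (hb : φ b = 0) :
    ∃ ξ ∈ Set.Ioo a b, φ'' ξ = 0 := by
  obtain ⟨c₁, hc₁, hφc₁⟩ := exists_hasDerivAt_eq_zero hax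
    (hφc.mono (Set.Icc_subset_Icc_right hxb.le)) (ha.trans hx.symm)
    fun t ht => hφ t ⟨ht.1, ht.2.trans hxb⟩
  obtain ⟨c₂, hc₂, hφc₂⟩ := exists_hasDerivAt_eq_zero hxb
    (hφc.mono (Set.Icc_subset_Icc_left hax.le)) (hx.trans hb.symm)
    fun t ht => hφ t ⟨hax.trans ht.1, ht.2⟩
  have hsub : Set.Icc c₁ c₂ ⊆ Set.Ioo a b := Set.Icc_subset_Ioo hc₁.1 hc₂.2
  obtain ⟨ξ, hξ, hφ'ξ⟩ := exists_hasDerivAt_eq_zero (hc₁.2.trans hc₂.1)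
    (fun t ht => (hφ' t (hsub ht)).continuousAt.continuousWithinAt)
    (hφc₁.trans hφc₂.symm) fun t ht => hφ' t (hsub (Set.Ioo_subset_Icc_self ht))
  exact ⟨ξ, hsub (Set.Ioo_subset_Icc_self hξ), hφ'ξ⟩

theorem abs_sub_chord_le {f f' f'' : ℝ → ℝ} {a b M : ℝ} (hab : a < b)
    (hf : ∀ s ∈ Set.Icc a b, HasDerivWithinAt f (f' s) (Set.Icc a b) s)
    (hf' : ∀ s ∈ Set.Icc a b, HasDerivWithinAt f' (f'' s) (Set.Icc a b) s)
    (hM : ∀ s ∈ Set.Icc a b, |f'' s| ≤ M) {x : ℝ} (hx : x ∈ Set.Icc a b) :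
    |f x - ((1 - (x - a) / (b - a)) * f a + (x - a) / (b - a) * f b)|
      ≤ (b - a) ^ 2 / 8 * M := by
  have hba : b - a ≠ 0 := sub_ne_zero.2 hab.ne'
  have hM0 : 0 ≤ M := (abs_nonneg _).trans (hM a ⟨le_rfl, hab.le⟩)
  rcases hx.1.eq_or_lt with rfl | hax
  · simpa using by positivity
  rcases hx.2.eq_or_lt with rfl | hxb
  · simpa [div_self hba] using by positivity
  set slope := (f b - f a) / (b - a)
  set e : ℝ → ℝ := fun t => f t - (f a + (t - a) * slope)
  have hxab : (x - a) * (x - b) ≠ 0 := mul_ne_zero (sub_ne_zero.2 hax.ne') (sub_ne_zero.2 hxb.ne)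
  -- `K` is chosen so that `φ` has a third zero at `x`; then `f'' = 2 K` somewhere in `(a, b)`.
  set K := e x / ((x - a) * (x - b))
  set φ : ℝ → ℝ := fun t => e t - K * ((t - a) * (t - b))
  have hderiv : ∀ t ∈ Set.Ioo a b, HasDerivAt f (f' t) t ∧ HasDerivAt f' (f'' t) t :=
    fun t ht => ⟨(hf t (Set.Ioo_subset_Icc_self ht)).hasDerivAt (Icc_mem_nhds ht.1 ht.2),
      (hf' t (Set.Ioo_subset_Icc_self ht)).hasDerivAt (Icc_mem_nhds ht.1 ht.2)⟩
  have hφ : ∀ t ∈ Set.Ioo a b, HasDerivAt φ (f' t - slope - K * (2 * t - a - b)) t := by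
    intro t ht
    have hq : HasDerivAt (fun t => (t - a) * (t - b)) (2 * t - a - b) t :=
      (((hasDerivAt_id' t).sub_const a).mul ((hasDerivAt_id' t).sub_const b)).congr_deriv
        (by ring)
    exact ((hderiv t ht).1.sub ((((hasDerivAt_id' t).sub_const a).mul_const slope).const_add
      (f a))).sub (hq.const_mul K) |>.congr_deriv (by ring)
  have hφ' : ∀ t ∈ Set.Ioo a b, HasDerivAt (fun t => f' t - slope - K * (2 * t - a - b))
      (f'' t - 2 * K) t := by
    intro t ht
    exact ((hderiv t ht).2.sub_const slope).sub
      (((((hasDerivAt_id' t).const_mul 2).sub_const a).sub_const b).const_mul K)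
      |>.congr_deriv (by ring)
  have hφc : ContinuousOn φ (Set.Icc a b) :=
    (HasDerivWithinAt.continuousOn hf).sub (by fun_prop) |>.sub (by fun_prop)
  obtain ⟨ξ, hξ, hξ0⟩ := exists_hasDerivAt_eq_zero_of_three_zeros hax hxb hφc hφ hφ'
    (by simp [φ, e]) (by simp only [φ, K]; rw [div_mul_cancel₀ _ hxab]; ring)
    (by simp only [φ, e, slope]; field_simp; ring)
  have hK : |K| ≤ M / 2 := by
    have := hM ξ (Set.Ioo_subset_Icc_self hξ)
    rw [show f'' ξ = 2 * K by linarith, abs_mul, abs_two] at this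
    linarith
  have hex : f x - ((1 - (x - a) / (b - a)) * f a + (x - a) / (b - a) * f b)
      = K * ((x - a) * (x - b)) := by
    rw [div_mul_cancel₀ _ hxab]; simp only [e, slope]; field_simp; ring
  rw [hex, abs_mul, show (x - a) * (x - b) = -((x - a) * (b - x)) by ring, abs_neg,
    abs_of_nonneg (mul_nonneg (sub_nonneg.2 hax.le) (sub_nonneg.2 hxb.le))]
  calc |K| * ((x - a) * (b - x)) ≤ M / 2 * ((x - a) * (b - x)) :=
        mul_le_mul_of_nonneg_right hK (mul_nonneg (sub_nonneg.2 hax.le) (sub_nonneg.2 hxb.le))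
    _ ≤ (b - a) ^ 2 / 8 * M := by nlinarith [sq_nonneg (a + b - 2 * x)]

theorem natCast_div_mem_Icc {i n : ℕ} (hi : i ≤ n) : (i : ℝ) / n ∈ Set.Icc (0 : ℝ) 1 :=
  ⟨by positivity, div_le_one_of_le₀ (by exact_mod_cast hi) n.cast_nonneg⟩

-- `min` assigns the right endpoint `t = 1` to the last cell.
noncomputable def cellIdx (n : ℕ) (t : ℝ) : ℕ := min ⌊t * n⌋₊ (n - 1)

section cellIdx

variable {n : ℕ} {t : ℝ}

theorem cellIdx_add_one_le (hn : 1 ≤ n) : cellIdx n t + 1 ≤ n := by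
  have := min_le_right ⌊t * n⌋₊ (n - 1)
  unfold cellIdx
  omega

theorem cellIdx_div_le (ht : 0 ≤ t) : (cellIdx n t : ℝ) / n ≤ t := by
  rcases n.eq_zero_or_pos with rfl | hn
  · simpa using ht
  rw [div_le_iff₀ (by exact_mod_cast hn)]
  calc (cellIdx n t : ℝ) ≤ ⌊t * n⌋₊ := by exact_mod_cast min_le_left _ _
    _ ≤ t * n := Nat.floor_le (by positivity)

theorem le_cellIdx_add_one_div (hn : 1 ≤ n) (ht : t ≤ 1) : t ≤ ((cellIdx n t : ℝ) + 1) / n := by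
  have hn' : (0 : ℝ) < n := by exact_mod_cast hn
  rw [le_div_iff₀ hn']
  rcases le_total ⌊t * n⌋₊ (n - 1) with h | h
  · rw [cellIdx, min_eq_left h]
    exact (Nat.lt_floor_add_one _).le
  · rw [cellIdx, min_eq_right h, Nat.cast_sub hn, Nat.cast_one, sub_add_cancel]
    nlinarith

theorem cellIdx_div_mem_Icc (hn : 1 ≤ n) : (cellIdx n t : ℝ) / n ∈ Set.Icc (0 : ℝ) 1 :=
  natCast_div_mem_Icc (Nat.le_of_succ_le (cellIdx_add_one_le hn))

theorem cellIdx_add_one_div_mem_Icc (hn : 1 ≤ n) :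
    ((cellIdx n t : ℝ) + 1) / n ∈ Set.Icc (0 : ℝ) 1 := by
  exact_mod_cast natCast_div_mem_Icc (cellIdx_add_one_le (t := t) hn)

end cellIdx

noncomputable def lineInterp (n : ℕ) (φ : ℝ → ℝ) (t : ℝ) : ℝ :=
  (1 - (t * n - cellIdx n t)) * φ (cellIdx n t / n) +
    (t * n - cellIdx n t) * φ ((cellIdx n t + 1) / n)

section lineInterp

variable {n : ℕ} {φ ψ : ℝ → ℝ} {t : ℝ}

theorem lineInterp_congr (hn : 1 ≤ n)
    (h : ∀ i ≤ n, φ ((i : ℕ) / n) = ψ ((i : ℕ) / n)) :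
    lineInterp n φ t = lineInterp n ψ t := by
  have hk := cellIdx_add_one_le (t := t) hn
  unfold lineInterp
  rw [h _ (by omega), show ((cellIdx n t : ℝ) + 1) = ((cellIdx n t + 1 : ℕ) : ℝ) by push_cast; ring,
    h _ hk]

theorem lineInterp_eq_self_of_affineOn (hn : 1 ≤ n) (ht : t ∈ Set.Icc (0 : ℝ) 1) {A B : ℝ}
    (hφ : ∀ s ∈ Set.Icc ((cellIdx n t : ℝ) / n) ((cellIdx n t + 1) / n), φ s = A + B * s) :
    lineInterp n φ t = φ t := by
  have hn' : (n : ℝ) ≠ 0 := by positivity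
  have hlo := cellIdx_div_le (n := n) ht.1
  have hhi := le_cellIdx_add_one_div hn ht.2
  rw [lineInterp, hφ t ⟨hlo, hhi⟩, hφ _ ⟨le_rfl, hlo.trans hhi⟩, hφ _ ⟨hlo.trans hhi, le_rfl⟩]
  field_simp
  ring

theorem abs_sub_lineInterp_le {φ' φ'' : ℝ → ℝ} {M : ℝ} (hn : 1 ≤ n)
    (hφ : ∀ s ∈ Set.Icc (0 : ℝ) 1, HasDerivWithinAt φ (φ' s) (Set.Icc 0 1) s)
    (hφ' : ∀ s ∈ Set.Icc (0 : ℝ) 1, HasDerivWithinAt φ' (φ'' s) (Set.Icc 0 1) s)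
    (hM : ∀ s ∈ Set.Icc (0 : ℝ) 1, |φ'' s| ≤ M) (ht : t ∈ Set.Icc (0 : ℝ) 1) :
    |φ t - lineInterp n φ t| ≤ ((n : ℝ)⁻¹) ^ 2 / 8 * M := by
  have hn' : (0 : ℝ) < n := by exact_mod_cast hn
  set a : ℝ := cellIdx n t / n
  set b : ℝ := (cellIdx n t + 1) / n
  have hba : b - a = (n : ℝ)⁻¹ := by simp only [a, b]; field_simp; ring
  have hab : a < b := by linarith [inv_pos.2 hn']
  have hcell : Set.Icc a b ⊆ Set.Icc 0 1 :=
    Set.Icc_subset_Icc (cellIdx_div_mem_Icc hn).1 (cellIdx_add_one_div_mem_Icc hn).2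
  have hlam : t * n - cellIdx n t = (t - a) / (b - a) := by rw [hba]; simp only [a]; field_simp
  rw [lineInterp, hlam, ← hba]
  exact abs_sub_chord_le hab (fun s hs => (hφ s (hcell hs)).mono hcell)
    (fun s hs => (hφ' s (hcell hs)).mono hcell) (fun s hs => hM s (hcell hs))
    ⟨cellIdx_div_le ht.1, le_cellIdx_add_one_div hn ht.2⟩

end lineInterp

section Operators

variable {d : ℕ} (N : Fin d → ℕ)

noncomputable def interpAlong (j : Fin d) (v : (Fin d → ℝ) → ℝ) (x : Fin d → ℝ) : ℝ :=
  lineInterp (N j) (fun s => v (update x j s)) (x j)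

noncomputable def errAlong (j : Fin d) (v : (Fin d → ℝ) → ℝ) (x : Fin d → ℝ) : ℝ :=
  v x - interpAlong N j v x

theorem interpAlong_sub (j : Fin d) (v w : (Fin d → ℝ) → ℝ) :
    interpAlong N j (v - w) = interpAlong N j v - interpAlong N j w := by
  funext x
  simp only [interpAlong, lineInterp, Pi.sub_apply]
  ring

theorem errAlong_eq_sub (j : Fin d) (v : (Fin d → ℝ) → ℝ) :
    errAlong N j v = v - interpAlong N j v := rfl

theorem interpAlong_eq_sub (j : Fin d) (v : (Fin d → ℝ) → ℝ) :
    interpAlong N j v = v - errAlong N j v :=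
  (sub_sub_cancel v _).symm

theorem interpAlong_left_comm (i j : Fin d) (v : (Fin d → ℝ) → ℝ) :
    interpAlong N i (interpAlong N j v) = interpAlong N j (interpAlong N i v) := by
  rcases eq_or_ne i j with rfl | hij
  · rfl
  funext x
  simp only [interpAlong, lineInterp, update_of_ne hij, update_of_ne hij.symm,
    update_comm hij]
  ring

theorem errAlong_left_comm (i j : Fin d) (v : (Fin d → ℝ) → ℝ) :
    errAlong N i (errAlong N j v) = errAlong N j (errAlong N i v) := by
  simp only [errAlong_eq_sub, interpAlong_sub]
  rw [interpAlong_left_comm N i j]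
  abel

instance : LeftCommutative (interpAlong N) := ⟨interpAlong_left_comm N⟩

instance : LeftCommutative (errAlong N) := ⟨errAlong_left_comm N⟩

noncomputable def interpOn (J : Finset (Fin d)) (v : (Fin d → ℝ) → ℝ) : (Fin d → ℝ) → ℝ :=
  J.val.foldr (interpAlong N) v

noncomputable def errOn (J : Finset (Fin d)) (v : (Fin d → ℝ) → ℝ) : (Fin d → ℝ) → ℝ :=
  J.val.foldr (errAlong N) v

variable {N}

@[simp]
theorem interpOn_empty (v : (Fin d → ℝ) → ℝ) : interpOn N ∅ v = v := rfl

@[simp]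
theorem errOn_empty (v : (Fin d → ℝ) → ℝ) : errOn N ∅ v = v := rfl

variable {a : Fin d} {J : Finset (Fin d)}

theorem interpOn_insert (ha : a ∉ J) (v : (Fin d → ℝ) → ℝ) :
    interpOn N (insert a J) v = interpAlong N a (interpOn N J v) := by
  rw [interpOn, Finset.insert_val_of_notMem ha, Multiset.foldr_cons, interpOn]

theorem errOn_insert (ha : a ∉ J) (v : (Fin d → ℝ) → ℝ) :
    errOn N (insert a J) v = errAlong N a (errOn N J v) := by
  rw [errOn, Finset.insert_val_of_notMem ha, Multiset.foldr_cons, errOn]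

theorem interpOn_insert' (ha : a ∉ J) (v : (Fin d → ℝ) → ℝ) :
    interpOn N (insert a J) v = interpOn N J (interpAlong N a v) := by
  rw [interpOn, Finset.insert_val_of_notMem ha, ← Multiset.singleton_add, add_comm,
    Multiset.foldr_add, Multiset.foldr_singleton, interpOn]

theorem errOn_insert' (ha : a ∉ J) (v : (Fin d → ℝ) → ℝ) :
    errOn N (insert a J) v = errOn N J (errAlong N a v) := by
  rw [errOn, Finset.insert_val_of_notMem ha, ← Multiset.singleton_add, add_comm,
    Multiset.foldr_add, Multiset.foldr_singleton, errOn]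

theorem interpOn_sub (S : Finset (Fin d)) (v w : (Fin d → ℝ) → ℝ) :
    interpOn N S (v - w) = interpOn N S v - interpOn N S w := by
  induction S using Finset.induction_on with
  | empty => rfl
  | insert a S ha ih => rw [interpOn_insert ha, interpOn_insert ha, interpOn_insert ha, ih,
      interpAlong_sub]

theorem interpOn_eq_sum (S : Finset (Fin d)) (v : (Fin d → ℝ) → ℝ) (x : Fin d → ℝ) :
    interpOn N S v x = ∑ J ∈ S.powerset, (-1) ^ J.card * errOn N J v x := by
  induction S using Finset.induction_on generalizing v with
  | empty => simp
  | insert a S ha ih =>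
    have hJ : ∀ J ∈ S.powerset, a ∉ J := fun J hJ h => ha (Finset.mem_powerset.1 hJ h)
    rw [interpOn_insert' ha, interpAlong_eq_sub, interpOn_sub, Pi.sub_apply, ih, ih,
      Finset.sum_powerset_insert ha, sub_eq_add_neg, ← Finset.sum_neg_distrib]
    congr 1
    refine Finset.sum_congr rfl fun J hJS => ?_
    rw [Finset.card_insert_of_notMem (hJ J hJS), errOn_insert' (hJ J hJS), pow_succ]
    ring

theorem errOn_congr {N' : Fin d → ℕ} (h : ∀ j ∈ J, N j = N' j) (v : (Fin d → ℝ) → ℝ) :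
    errOn N J v = errOn N' J v := by
  induction J using Finset.induction_on with
  | empty => rfl
  | insert a J ha ih =>
    rw [errOn_insert ha, errOn_insert ha, ih fun j hj => h j (Finset.mem_insert_of_mem hj)]
    funext x
    simp only [errAlong, interpAlong, h a (Finset.mem_insert_self a J)]

end Operators

section Derivatives

variable {d : ℕ}

theorem update_mem_unitCube {x : Fin d → ℝ} (hx : x ∈ unitCube d) (j : Fin d) {t : ℝ}
    (ht : t ∈ Set.Icc (0 : ℝ) 1) : update x j t ∈ unitCube d := by
  refine ⟨fun k => ?_, fun k => ?_⟩ <;> rcases eq_or_ne k j with rfl | hkj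
  · simpa using ht.1
  · simpa [update_of_ne hkj] using hx.1 k
  · simpa using ht.2
  · simpa [update_of_ne hkj] using hx.2 k

variable {N : Fin d → ℕ}

theorem hasDerivWithinAt_errOn_update (hN : ∀ k, 1 ≤ N k) {a : Fin d}
    {w w' : (Fin d → ℝ) → ℝ} (hw : ∀ y ∈ unitCube d,
      HasDerivWithinAt (fun s => w (update y a s)) (w' y) (Set.Icc 0 1) (y a))
    {J : Finset (Fin d)} (ha : a ∉ J) {x : Fin d → ℝ} (hx : x ∈ unitCube d) {s : ℝ}
    (hs : s ∈ Set.Icc (0 : ℝ) 1) :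
    HasDerivWithinAt (fun t => errOn N J w (update x a t)) (errOn N J w' (update x a s))
      (Set.Icc 0 1) s := by
  induction J using Finset.induction_on generalizing x with
  | empty => simpa using hw _ (update_mem_unitCube hx a hs)
  | insert b J hb ih =>
    have hab : a ≠ b := fun h => ha (h ▸ Finset.mem_insert_self b J)
    have ih' := fun y hy => ih (fun h => ha (Finset.mem_insert_of_mem h)) (x := y) hy
    have h₀ := ih' _ (update_mem_unitCube hx b (cellIdx_div_mem_Icc (t := x b) (hN b)))
    have h₁ := ih' _ (update_mem_unitCube hx b (cellIdx_add_one_div_mem_Icc (t := x b) (hN b)))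
    simp only [errOn_insert hb, errAlong, interpAlong, lineInterp, update_of_ne hab.symm,
      update_comm hab]
    exact (ih' x hx).sub (((h₀.const_mul _).add (h₁.const_mul _)))

end Derivatives

section MixedDerivatives

variable {d : ℕ}

theorem foldr_iterate_pd_update {l : List (Fin d)} (hl : l.Pairwise (· < ·)) {a : Fin d}
    (ha : a ∈ l) {γ : Fin d → ℕ} (hγ : ∀ i ≤ a, γ i = 0) (n : ℕ) (u : (Fin d → ℝ) → ℝ) :
    l.foldr (fun i v => (pd d i)^[update γ a n i] v) u
      = (pd d a)^[n] (l.foldr (fun i v => (pd d i)^[γ i] v) u) := by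
  induction l with
  | nil => cases ha
  | cons b t ih =>
    rw [List.pairwise_cons] at hl
    rcases List.mem_cons.1 ha with rfl | hat
    · have hat : a ∉ t := fun h => lt_irrefl a (hl.1 a h)
      rw [List.foldr_cons, List.foldr_cons, update_self, hγ a le_rfl, iterate_zero, id,
        List.foldr_ext _ _ _ fun i hi _ => by rw [update_of_ne (ne_of_mem_of_not_mem hi hat)]]
    · have hba := hl.1 a hat
      rw [List.foldr_cons, List.foldr_cons, update_of_ne hba.ne, hγ b hba.le, iterate_zero, id,
        id, ih hl.2 hat]

/-- `mderiv` applies the derivative in direction `0` outermost, so a derivative in a direction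
below the support of `γ` is absorbed into `D^γ`. -/
theorem iterate_pd_mderiv {a : Fin d} {γ : Fin d → ℕ} (hγ : ∀ i ≤ a, γ i = 0) (n : ℕ)
    (u : (Fin d → ℝ) → ℝ) : (pd d a)^[n] (mderiv d γ u) = mderiv d (update γ a n) u :=
  (foldr_iterate_pd_update (List.sortedLT_finRange d).pairwise (List.mem_finRange a) hγ n u).symm

@[simp]
theorem mderiv_zero (u : (Fin d → ℝ) → ℝ) : mderiv d 0 u = u := by
  simp [mderiv]

theorem hasDerivWithinAt_iterate_pd_mderiv {u : (Fin d → ℝ) → ℝ}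
    (hu : HasDerivsOn d (fun _ => 2) u (unitCube d)) {a : Fin d} {γ : Fin d → ℕ}
    (hγ : ∀ i, γ i ≤ 2) (hγa : ∀ i ≤ a, γ i = 0) {n : ℕ} (hn : n < 2) {y : Fin d → ℝ}
    (hy : y ∈ unitCube d) :
    HasDerivWithinAt (fun s => (pd d a)^[n] (mderiv d γ u) (update y a s))
      ((pd d a)^[n + 1] (mderiv d γ u) y) (Set.Icc 0 1) (y a) := by
  rw [iterate_succ_apply', iterate_pd_mderiv hγa]
  refine (hu _ (fun i => ?_) a (by simpa using hn) y hy).hasDerivWithinAt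
  rcases eq_or_ne i a with rfl | hia
  · simpa using hn.le
  · simpa [update_of_ne hia] using hγ i

end MixedDerivatives

section ErrorBound

variable {d : ℕ} {N : Fin d → ℕ}

theorem abs_errOn_mderiv_le (hN : ∀ k, 1 ≤ N k) {u : (Fin d → ℝ) → ℝ}
    (hu : HasDerivsOn d (fun _ => 2) u (unitCube d)) (J : Finset (Fin d)) {γ : Fin d → ℕ}
    (hγ : ∀ i, γ i ≤ 2) (hγJ : ∀ j ∈ J, ∀ i ≤ j, γ i = 0) {B : ℝ}
    (hB : ∀ y ∈ unitCube d, |mderiv d (fun i => if i ∈ J then 2 else γ i) u y| ≤ B)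
    {x : Fin d → ℝ} (hx : x ∈ unitCube d) :
    |errOn N J (mderiv d γ u) x| ≤ (∏ j ∈ J, ((N j : ℝ)⁻¹) ^ 2 / 8) * B := by
  induction J using Finset.induction_on_max generalizing γ x with
  | empty => simpa using hB x hx
  | insert a J hlt ih =>
    have ha : a ∉ J := fun h => lt_irrefl a (hlt a h)
    have hγa : ∀ i ≤ a, γ i = 0 := hγJ a (Finset.mem_insert_self a J)
    set f : ℕ → ℝ → ℝ := fun n s => errOn N J ((pd d a)^[n] (mderiv d γ u)) (update x a s)
    have hf : ∀ n < 2, ∀ s ∈ Set.Icc (0 : ℝ) 1,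
        HasDerivWithinAt (f n) (f (n + 1) s) (Set.Icc 0 1) s :=
      fun n hn s hs => hasDerivWithinAt_errOn_update hN
        (fun y hy => hasDerivWithinAt_iterate_pd_mderiv hu hγ hγa hn hy) ha hx hs
    have hf₂ : ∀ s ∈ Set.Icc (0 : ℝ) 1, |f 2 s| ≤ (∏ j ∈ J, ((N j : ℝ)⁻¹) ^ 2 / 8) * B := by
      intro s hs
      simp only [f, iterate_pd_mderiv hγa]
      refine ih (fun i => ?_) (fun j hj i hij => ?_) (fun y hy => ?_) (update_mem_unitCube hx a hs)
      · rcases eq_or_ne i a with rfl | hia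
        · simp
        · simpa [update_of_ne hia] using hγ i
      · rw [update_of_ne (hij.trans_lt (hlt j hj)).ne]
        exact hγa i (hij.trans (hlt j hj).le)
      · convert hB y hy using 4 with i
        rcases eq_or_ne i a with rfl | hia
        · simp
        · simp [hia]
    calc |errOn N (insert a J) (mderiv d γ u) x|
          = |f 0 (x a) - lineInterp (N a) (f 0) (x a)| := by
          simp [errOn_insert ha, errAlong, interpAlong, f]
      _ ≤ ((N a : ℝ)⁻¹) ^ 2 / 8 * ((∏ j ∈ J, ((N j : ℝ)⁻¹) ^ 2 / 8) * B) :=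
          abs_sub_lineInterp_le (hN a) (hf 0 two_pos) (hf 1 one_lt_two) hf₂
            ⟨hx.1 a, hx.2 a⟩
      _ = (∏ j ∈ insert a J, ((N j : ℝ)⁻¹) ^ 2 / 8) * B := by
          rw [Finset.prod_insert ha]
          ring

theorem abs_errOn_mul_prod_sq_le (hN : ∀ k, 1 ≤ N k) {u : (Fin d → ℝ) → ℝ}
    (hu : HasDerivsOn d (fun _ => 2) u (unitCube d)) (J : Finset (Fin d)) {B : ℝ}
    (hB : ∀ y ∈ unitCube d, |mderiv d (fun i => if i ∈ J then 2 else 0) u y| ≤ B)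
    {x : Fin d → ℝ} (hx : x ∈ unitCube d) :
    |errOn N J u x| * ∏ j ∈ J, (N j : ℝ) ^ 2 ≤ (1 / 8) ^ J.card * B := by
  have herr := abs_errOn_mderiv_le hN hu J (γ := 0) (fun _ => zero_le_two)
    (fun _ _ _ _ => rfl) hB hx
  rw [mderiv_zero] at herr
  calc _ ≤ (∏ j ∈ J, ((N j : ℝ)⁻¹) ^ 2 / 8) * B * ∏ j ∈ J, (N j : ℝ) ^ 2 := by gcongr
    _ = (1 / 8) ^ J.card * B := by
      rw [mul_right_comm, ← Finset.prod_mul_distrib, ← Finset.prod_const]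
      congr 1
      refine Finset.prod_congr rfl fun j _ => ?_
      field_simp [Nat.one_le_iff_ne_zero.1 (hN j)]

end ErrorBound

section Interpolant

variable {d : ℕ} {N : Fin d → ℕ}

def IsPiecewiseMultilinear (N : Fin d → ℕ) (g : (Fin d → ℝ) → ℝ) : Prop :=
  ∀ j : Fin d → ℕ, (∀ k, j k + 1 ≤ N k) →
    ∃ c : Finset (Fin d) → ℝ, ∀ x : Fin d → ℝ,
      (∀ k, (j k : ℝ) / (N k : ℝ) ≤ x k ∧ x k ≤ ((j k : ℝ) + 1) / (N k : ℝ)) →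
      g x = ∑ T : Finset (Fin d), c T * ∏ k ∈ T, x k

theorem exists_affine_update_multilinear (c : Finset (Fin d) → ℝ) (x : Fin d → ℝ) (j : Fin d) :
    ∃ A B : ℝ, ∀ s, ∑ T : Finset (Fin d), c T * ∏ k ∈ T, update x j s k = A + B * s := by
  refine ⟨∑ T : Finset (Fin d), if j ∈ T then 0 else c T * ∏ k ∈ T, x k,
    ∑ T : Finset (Fin d), if j ∈ T then c T * ∏ k ∈ T \ {j}, x k else 0, fun s => ?_⟩
  rw [Finset.sum_mul, ← Finset.sum_add_distrib]
  refine Finset.sum_congr rfl fun T _ => ?_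
  by_cases hj : j ∈ T
  · simp only [Finset.prod_update_of_mem hj, if_pos hj]
    ring
  · simp [Finset.prod_update_of_notMem hj, hj]

theorem interpAlong_eq_self (hN : ∀ k, 1 ≤ N k) {g : (Fin d → ℝ) → ℝ}
    (hg : IsPiecewiseMultilinear N g) (j : Fin d) {x : Fin d → ℝ} (hx : x ∈ unitCube d) :
    interpAlong N j g x = g x := by
  obtain ⟨c, hc⟩ := hg (fun k => cellIdx (N k) (x k)) fun k => cellIdx_add_one_le (hN k)
  obtain ⟨A, B, hAB⟩ := exists_affine_update_multilinear c x j
  conv_rhs => rw [← update_eq_self j x]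
  refine lineInterp_eq_self_of_affineOn (A := A) (B := B) (hN j) ⟨hx.1 j, hx.2 j⟩ fun s hs => ?_
  rw [hc _ fun k => ?_, hAB]
  rcases eq_or_ne k j with rfl | hkj
  · simpa using hs
  · rw [update_of_ne hkj]
    exact ⟨cellIdx_div_le (hx.1 k), le_cellIdx_add_one_div (hN k) (hx.2 k)⟩

theorem interpOn_eq_self (hN : ∀ k, 1 ≤ N k) {g : (Fin d → ℝ) → ℝ}
    (hg : IsPiecewiseMultilinear N g) (S : Finset (Fin d)) {x : Fin d → ℝ}
    (hx : x ∈ unitCube d) : interpOn N S g x = g x := by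
  induction S using Finset.induction_on generalizing x with
  | empty => rfl
  | insert a S ha ih =>
    rw [interpOn_insert ha, ← interpAlong_eq_self hN hg a hx]
    exact lineInterp_congr (hN a) fun i hi =>
      ih (update_mem_unitCube hx a (natCast_div_mem_Icc hi))

theorem interpOn_congr_grid (hN : ∀ k, 1 ≤ N k) {S : Finset (Fin d)}
    {v v' : (Fin d → ℝ) → ℝ} {x : Fin d → ℝ}
    (h : ∀ y : Fin d → ℝ, (∀ k ∉ S, y k = x k) →
      (∀ k ∈ S, ∃ i ≤ N k, y k = (i : ℝ) / N k) → v y = v' y) :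
    interpOn N S v x = interpOn N S v' x := by
  induction S using Finset.induction_on generalizing x with
  | empty => exact h x (fun _ _ => rfl) fun _ h => absurd h (Finset.notMem_empty _)
  | insert a S ha ih =>
    rw [interpOn_insert ha, interpOn_insert ha]
    refine lineInterp_congr (hN a) fun i hi =>
      ih fun y hyx hyS => h y (fun k hk => ?_) fun k hk => ?_
    · rw [Finset.mem_insert, not_or] at hk
      rw [hyx k hk.2, update_of_ne hk.1]
    · rcases Finset.mem_insert.1 hk with rfl | hk
      · exact ⟨i, hi, by rw [hyx k ha, update_self]⟩
      · exact hyS k hk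

end Interpolant

theorem sub_interpOn_eq_sum {d : ℕ} (N : Fin d → ℕ) (S : Finset (Fin d))
    (v : (Fin d → ℝ) → ℝ) (x : Fin d → ℝ) :
    v x - interpOn N S v x
      = ∑ J ∈ S.powerset with J.Nonempty, (-1) ^ (J.card + 1) * errOn N J v x := by
  have hempty : {J ∈ S.powerset | ¬J.Nonempty} = {∅} := by
    ext J
    simp only [Finset.mem_filter, Finset.mem_powerset, Finset.not_nonempty_iff_eq_empty,
      Finset.mem_singleton]
    exact ⟨And.right, fun h => ⟨h ▸ Finset.empty_subset S, h⟩⟩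
  rw [interpOn_eq_sum, ← Finset.sum_filter_add_sum_filter_not _ Finset.Nonempty, hempty]
  simp [pow_succ, Finset.sum_neg_distrib]

theorem multilinear_interpolation_error_general (d : ℕ)
    (u : (Fin d → ℝ) → ℝ) (hu : MemX d 2 u) :
    ∃ a : Finset (Fin d) → (Fin d → ℕ) → (Fin d → ℝ) → ℝ,
      (∀ (J : Finset (Fin d)) (N N' : Fin d → ℕ),
        (∀ j ∈ J, N j = N' j) → a J N = a J N') ∧
      (∀ J : Finset (Fin d), J.Nonempty → ∀ N : Fin d → ℕ, (∀ k, 1 ≤ N k) →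
        ∀ B : ℝ,
          (∀ y ∈ unitCube d,
            |mderiv d (fun i => if i ∈ J then 2 else 0) u y| ≤ B) →
          ∀ x ∈ unitCube d, |a J N x| ≤ (4 / 27 : ℝ) ^ J.card * B) ∧
      (∀ N : Fin d → ℕ, (∀ k, 1 ≤ N k) → ∀ g : (Fin d → ℝ) → ℝ,
        ((∀ i : Fin d → ℕ, (∀ k, i k ≤ N k) →
            g (fun k => (i k : ℝ) / (N k : ℝ)) = u (fun k => (i k : ℝ) / (N k : ℝ))) ∧
         (∀ j : Fin d → ℕ, (∀ k, j k + 1 ≤ N k) →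
            ∃ c : Finset (Fin d) → ℝ, ∀ x : Fin d → ℝ,
              (∀ k, (j k : ℝ) / (N k : ℝ) ≤ x k ∧ x k ≤ ((j k : ℝ) + 1) / (N k : ℝ)) →
              g x = ∑ T : Finset (Fin d), c T * ∏ k ∈ T, x k)) →
        ∀ x ∈ unitCube d,
          u x - g x =
            ∑ J ∈ Finset.univ.filter (fun J : Finset (Fin d) => J.Nonempty),
              a J N x * ∏ j ∈ J, ((N j : ℝ)⁻¹) ^ 2) := by
  refine ⟨fun J N x => (-1) ^ (J.card + 1) * errOn N J u x * ∏ j ∈ J, (N j : ℝ) ^ 2,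
    fun J N N' h => ?_, fun J _ N hN B hB x hx => ?_, ?_⟩
  · funext x
    dsimp only
    rw [errOn_congr h, Finset.prod_congr rfl fun j hj => by rw [h j hj]]
  · calc _ = |errOn N J u x| * ∏ j ∈ J, (N j : ℝ) ^ 2 := by simp [abs_mul, Finset.abs_prod]
      _ ≤ (1 / 8) ^ J.card * B := abs_errOn_mul_prod_sq_le hN hu.1 J hB hx
      _ ≤ (4 / 27) ^ J.card * B := by
          gcongr ?_ ^ _ * _
          · exact (abs_nonneg _).trans (hB x hx)
          · norm_num
  · rintro N hN g ⟨hg_grid, hg_cell⟩ x hx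
    rw [← interpOn_eq_self hN hg_cell Finset.univ hx, interpOn_congr_grid hN (v' := u) ?_,
      sub_interpOn_eq_sum, Finset.powerset_univ]
    · refine Finset.sum_congr rfl fun J _ => ?_
      rw [mul_assoc, ← Finset.prod_mul_distrib,
        Finset.prod_eq_one fun j _ => by field_simp [Nat.one_le_iff_ne_zero.1 (hN j)], mul_one]
    · intro y _ hy
      choose i hi using fun k => hy k (Finset.mem_univ k)
      obtain rfl : y = fun k => (i k : ℝ) / N k := funext fun k => (hi k).2
      exact hg_grid i fun k => (hi k).1

/-- Multilinear interpolation error expansion for functions with bounded mixed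
derivatives (Theorem `lemma-approx`): for `u ∈ X_2^d`,
`u - Iu = Σ_{∅≠J} α_J(·;(h_j)_{j∈J}) Π_{j∈J} h_j²` with
`‖α_J‖_∞ ≤ (4/27)^{|J|} ‖D^{β(J)}u‖_∞`. -/
theorem multilinear_interpolation_error (d : ℕ) (hd : 1 ≤ d)
    (u : (Fin d → ℝ) → ℝ) (hu : MemX d 2 u) :
    ∃ a : Finset (Fin d) → (Fin d → ℕ) → (Fin d → ℝ) → ℝ,
      (∀ (J : Finset (Fin d)) (N N' : Fin d → ℕ),
        (∀ j ∈ J, N j = N' j) → a J N = a J N') ∧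
      (∀ J : Finset (Fin d), J.Nonempty → ∀ N : Fin d → ℕ, (∀ k, 1 ≤ N k) →
        ∀ B : ℝ,
          (∀ y ∈ unitCube d,
            |mderiv d (fun i => if i ∈ J then 2 else 0) u y| ≤ B) →
          ∀ x ∈ unitCube d, |a J N x| ≤ (4 / 27 : ℝ) ^ J.card * B) ∧
      (∀ N : Fin d → ℕ, (∀ k, 1 ≤ N k) → ∀ g : (Fin d → ℝ) → ℝ,
        ((∀ i : Fin d → ℕ, (∀ k, i k ≤ N k) →
            g (fun k => (i k : ℝ) / (N k : ℝ)) = u (fun k => (i k : ℝ) / (N k : ℝ))) ∧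
         (∀ j : Fin d → ℕ, (∀ k, j k + 1 ≤ N k) →
            ∃ c : Finset (Fin d) → ℝ, ∀ x : Fin d → ℝ,
              (∀ k, (j k : ℝ) / (N k : ℝ) ≤ x k ∧ x k ≤ ((j k : ℝ) + 1) / (N k : ℝ)) →
              g x = ∑ T : Finset (Fin d), c T * ∏ k ∈ T, x k)) →
        ∀ x ∈ unitCube d,
          u x - g x =
            ∑ J ∈ Finset.univ.filter (fun J : Finset (Fin d) => J.Nonempty),
              a J N x * ∏ j ∈ J, ((N j : ℝ)⁻¹) ^ 2) :=
  multilinear_interpolation_error_general d u hu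
end

section
/- Let d ≥ 1 and let U : ℕ^d → ℝ. Define the hierarchical surplus δU = δ_1⋯δ_d U, where for each k, (δ_k V)(i) = V(i) − V(i − e_k) if i_k > 0 and (δ_k V)(i) = V(i) if i_k = 0. Then for every n ≥ d − 1, Σ_{i∈ℕ^d, i_1+⋯+i_d ≤ n} (δU)(i) = Σ_{k=0}^{d−1} (−1)^k · binom(d−1, k) · Σ_{i∈ℕ^d, i_1+⋯+i_d = n−k} U(i). -/
/-!
Unfolding the `d` one-dimensional differences gives the inclusion–exclusion expansion
`δU(i) = ∑_{s ⊆ supp i} (-1)^{#s} U(i - 1_s)`. Summing over `|i|₁ ≤ n` and substituting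
`j = i - 1_s` turns the contribution of `s` into `(-1)^{#s} T(#s)`, where `T(c)` is the sum of
`U` over `|j|₁ + c ≤ n`; it depends on `s` only through `#s`, which gives
`∑_k (-1)^k (d choose k) T(k)`. Pascal's rule rewrites this as
`∑_{k<d} (-1)^k (d-1 choose k) (T(k) - T(k+1))`, and `T(k) - T(k+1)` is the level sum at
`|j|₁ = n - k` as long as `k ≤ n`.
-/

/-- One-directional hierarchical difference operator `δ_k`. -/
def dOp (d : ℕ) (k : Fin d) (V : (Fin d → ℕ) → ℝ) : (Fin d → ℕ) → ℝ :=
  fun i => if i k = 0 then V i else V i - V (Function.update i k (i k - 1))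

/-- Hierarchical surplus `δU = δ_1 ⋯ δ_d U`. -/
def surplus (d : ℕ) (U : (Fin d → ℕ) → ℝ) : (Fin d → ℕ) → ℝ :=
  (List.finRange d).foldr (fun k V => dOp d k V) U

open Finset

section LatticeShift

variable {ι : Type*} [Fintype ι] [DecidableEq ι]

lemma mem_piFinset_range_of_sum_le {n : ℕ} {i : ι → ℕ} (h : ∑ k, i k ≤ n) :
    i ∈ Fintype.piFinset fun _ : ι => range (n + 1) :=
  Fintype.mem_piFinset.2 fun k => mem_range.2 <| Nat.lt_succ_of_le <|
    (single_le_sum (fun _ _ => Nat.zero_le _) (mem_univ k)).trans h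

omit [DecidableEq ι] in
lemma sum_indicator_one (s : Finset ι) : ∑ k, (s : Set ι).indicator (1 : ι → ℕ) k = #s := by
  rw [sum_indicator_subset _ (subset_univ s)]
  simp

omit [DecidableEq ι] in
lemma indicator_one_le_iff {s : Finset ι} {i : ι → ℕ} :
    (s : Set ι).indicator 1 ≤ i ↔ s ⊆ univ.filter fun k => i k ≠ 0 := by
  simp only [subset_iff, mem_filter, mem_univ, true_and]
  refine ⟨fun h k hk => ?_, fun h k => ?_⟩
  · have := h k
    simp [hk] at this
    omega
  · by_cases hk : k ∈ s
    · simpa [hk, Nat.one_le_iff_ne_zero] using h hk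
    · simp [hk]

/-- `i ↦ i - 1_s` is a bijection from the points of `|i|₁ ≤ n` that are positive on `s`
onto the points of `|j|₁ + #s ≤ n`, with inverse `j ↦ j + 1_s`. -/
lemma sum_comp_sub_indicator {β : Type*} [AddCommMonoid β] (f : (ι → ℕ) → β) (n : ℕ)
    (s : Finset ι) :
    ∑ i ∈ (Fintype.piFinset fun _ : ι => range (n + 1)).filter
        (fun i => ∑ k, i k ≤ n ∧ s ⊆ univ.filter fun k => i k ≠ 0),
        f (i - (s : Set ι).indicator 1)
      = ∑ j ∈ (Fintype.piFinset fun _ : ι => range (n + 1)).filter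
        (fun j => ∑ k, j k + #s ≤ n), f j := by
  set e : ι → ℕ := (s : Set ι).indicator 1
  have sum_add_e (j : ι → ℕ) : ∑ k, (j + e) k = ∑ k, j k + #s := by
    simp only [Pi.add_apply, sum_add_distrib, e, sum_indicator_one]
  refine sum_nbij' (· - e) (· + e) ?_ ?_ ?_ ?_ fun _ _ => rfl
  · intro i hi
    obtain ⟨-, hn, hs⟩ := mem_filter.1 hi
    have hi : i - e + e = i := tsub_add_cancel_of_le (indicator_one_le_iff.2 hs)
    have hn' : ∑ k, (i - e) k + #s ≤ n := by rwa [← sum_add_e, hi]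
    exact mem_filter.2 ⟨mem_piFinset_range_of_sum_le (by omega), hn'⟩
  · intro j hj
    have hn : ∑ k, (j + e) k ≤ n := (sum_add_e j).trans_le (mem_filter.1 hj).2
    exact mem_filter.2 ⟨mem_piFinset_range_of_sum_le hn, hn, indicator_one_le_iff.1 le_add_self⟩
  · intro i hi
    exact tsub_add_cancel_of_le (indicator_one_le_iff.2 (mem_filter.1 hi).2.2)
  · intro j _
    exact add_tsub_cancel_right j e

lemma sum_filter_add_le_eq_add {β : Type*} [AddCommMonoid β] (f : (ι → ℕ) → β) {n k : ℕ}
    (hk : k ≤ n) :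
    ∑ j ∈ (Fintype.piFinset fun _ : ι => range (n + 1)).filter
        (fun j => ∑ l, j l + k ≤ n), f j
      = ∑ j ∈ (Fintype.piFinset fun _ : ι => range (n + 1)).filter
          (fun j => ∑ l, j l + (k + 1) ≤ n), f j
        + ∑ j ∈ (Fintype.piFinset fun _ : ι => range (n + 1)).filter
          (fun j => ∑ l, j l = n - k), f j := by
  rw [← sum_union (disjoint_filter.2 fun j _ h => by omega), ← filter_or]
  exact sum_congr (filter_congr fun j _ => by omega) fun _ _ => rfl

omit [Fintype ι] in
lemma update_pred_sub_indicator {i : ι → ℕ} {s : Finset ι} {a : ι} (ha : a ∉ s) :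
    Function.update i a (i a - 1) - (s : Set ι).indicator 1 =
      i - (↑(insert a s) : Set ι).indicator 1 := by
  funext k
  by_cases hk : k = a
  · subst hk
    simp [ha]
  · simp [hk, Set.indicator_apply]

end LatticeShift

lemma foldr_dOp_eq_sum_powerset (d : ℕ) (U : (Fin d → ℕ) → ℝ) {l : List (Fin d)}
    (hl : l.Nodup) (i : Fin d → ℕ) :
    l.foldr (fun k V => dOp d k V) U i
      = ∑ s ∈ (l.toFinset.filter fun k => i k ≠ 0).powerset,
          (-1 : ℝ) ^ #s * U (i - (s : Set (Fin d)).indicator 1) := by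
  induction l generalizing i with
  | nil => simp [← Pi.zero_def]
  | cons a l ih =>
    obtain ⟨ha, hl⟩ := List.nodup_cons.1 hl
    have haF : a ∉ l.toFinset.filter fun k => i k ≠ 0 := by simp [ha]
    rw [List.foldr_cons, List.toFinset_cons, filter_insert]
    by_cases hia : i a = 0
    · simp [dOp, hia, ih hl]
    have hF : (l.toFinset.filter fun k => Function.update i a (i a - 1) k ≠ 0)
        = l.toFinset.filter fun k => i k ≠ 0 :=
      filter_congr fun k hk => by
        rw [Function.update_of_ne (by rintro rfl; exact ha (List.mem_toFinset.1 hk))]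
    rw [dOp, if_neg hia, if_pos hia, ih hl, ih hl, hF, sum_powerset_insert haF, sub_eq_add_neg,
      ← sum_neg_distrib]
    congr 1
    refine sum_congr rfl fun s hs => ?_
    have has : a ∉ s := fun h => haF (mem_powerset.1 hs h)
    rw [card_insert_of_notMem has, pow_succ, update_pred_sub_indicator has]
    ring

lemma surplus_eq_sum_powerset (d : ℕ) (U : (Fin d → ℕ) → ℝ) (i : Fin d → ℕ) :
    surplus d U i = ∑ s ∈ (univ.filter fun k => i k ≠ 0).powerset,
      (-1 : ℝ) ^ #s * U (i - (s : Set (Fin d)).indicator 1) := by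
  rw [surplus, foldr_dOp_eq_sum_powerset d U (List.nodup_finRange d), List.toFinset_finRange]

lemma sum_range_succ_alternating_choose_mul {R : Type*} [CommRing R] (T : ℕ → R) (m : ℕ) :
    ∑ k ∈ range (m + 2), (-1 : R) ^ k * (m + 1).choose k * T k
      = ∑ k ∈ range (m + 1), (-1 : R) ^ k * m.choose k * (T k - T (k + 1)) := by
  calc _ = ∑ k ∈ range (m + 2), ((m + 1).choose k : R) * ((-1) ^ k * T k) :=
        sum_congr rfl fun _ _ => by ring
    _ = _ := sum_choose_succ_mul (fun k _ => (-1 : R) ^ k * T k) m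
    _ = _ := by
      rw [← sum_add_distrib]
      exact sum_congr rfl fun _ _ => by ring

/-- The sparse grid combination formula: summing the hierarchical surplus over
`|i|₁ ≤ n` equals the alternating combination of the level sums. -/
theorem combination_formula (d : ℕ) (hd : 1 ≤ d) (U : (Fin d → ℕ) → ℝ)
    (n : ℕ) (hn : d - 1 ≤ n) :
    ∑ i ∈ (Fintype.piFinset fun _ : Fin d => Finset.range (n + 1)).filter
        (fun i => ∑ k, i k ≤ n), surplus d U i
      = ∑ k ∈ Finset.range d, (-1 : ℝ) ^ k * (Nat.choose (d - 1) k : ℝ) *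
          ∑ i ∈ (Fintype.piFinset fun _ : Fin d => Finset.range (n + 1)).filter
              (fun i => ∑ j, i j = n - k), U i := by
  obtain ⟨m, rfl⟩ : ∃ m, d = m + 1 := ⟨d - 1, by omega⟩
  set T : ℕ → ℝ := fun c => ∑ j ∈ (Fintype.piFinset fun _ => range (n + 1)).filter
    (fun j => ∑ k, j k + c ≤ n), U j
  calc _ = ∑ s ∈ (univ : Finset (Fin (m + 1))).powerset, (-1 : ℝ) ^ #s * T #s := by
        simp_rw [surplus_eq_sum_powerset]
        rw [sum_comm' (t' := univ.powerset)
          (s' := fun s => (Fintype.piFinset fun _ => range (n + 1)).filter fun i =>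
            ∑ k, i k ≤ n ∧ s ⊆ univ.filter fun k => i k ≠ 0)]
        · exact sum_congr rfl fun s _ => by rw [← mul_sum, sum_comp_sub_indicator]
        · intro i s
          simp only [mem_filter, mem_powerset, powerset_univ, mem_univ, and_true]
          tauto
    _ = ∑ k ∈ range (m + 2), (-1 : ℝ) ^ k * (m + 1).choose k * T k := by
        rw [sum_powerset_apply_card (fun c => (-1 : ℝ) ^ c * T c), card_univ, Fintype.card_fin]
        exact sum_congr rfl fun _ _ => by rw [nsmul_eq_mul]; ring
    _ = ∑ k ∈ range (m + 1), (-1 : ℝ) ^ k * m.choose k * (T k - T (k + 1)) :=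
        sum_range_succ_alternating_choose_mul T m
    _ = _ := sum_congr rfl fun k hk => by
        have hkn : k ≤ n := by simp at hk hn; omega
        rw [Nat.add_sub_cancel, show T k = T (k + 1) + _ from sum_filter_add_le_eq_add U hkn]
        ring
end

section
/- Let d ≥ 1, 1 ≤ m ≤ d, let p ≥ 1 be an integer, and let v : (0,∞)^m → ℝ. Define F : ℕ → ℝ by F(n) = Σ_{i∈ℕ^d, i_1+⋯+i_d = n} v(2^{−i_1},…,2^{−i_m})·2^{−p(i_1+⋯+i_m)}, and define s_l = Σ_{j∈ℕ^m, j_1+⋯+j_m = l} v(2^{−j_1},…,2^{−j_m}) for l ∈ ℕ. Then for every n ∈ ℕ, (δ^{d−1} F)(n) = 2^{−p(n+d−1)} · Σ_{i=0}^{m−1} binom(m−1, i) · (−2^p)^i · s_{n+d−1−i}, where δ is the forward difference operator. -/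
/-- Forward difference operator: `(fdiff F) n = F (n+1) - F n`. -/
def fdiff (F : ℕ → ℝ) : ℕ → ℝ := fun n => F (n + 1) - F n

/-!
The weight of `i ∈ ℕ^d` depends only on its first `m` coordinates, so summing out the last
coordinate turns the `d`-variable sum into the partial sums of the `(d - 1)`-variable one, and one
forward difference undoes the partial summation. After `d - m` differences only
`l ↦ 2^{-pl} s_l` remains, evaluated at `n + d - m`; the last `m - 1` differences are expanded by
the binomial formula `δ^k g(n) = Σ_j binom(k, j) (-1)^{k-j} g(n + j)`, reflected to `j = k - i`.
-/

open Finset Finset.Nat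
open scoped fwdDiff

theorem fdiff_eq_fwdDiff : fdiff = Δ_[1] := rfl

theorem filter_piFinset_sum_eq_antidiagonalTuple (c l : ℕ) :
    (Fintype.piFinset fun _ : Fin c => range (l + 1)).filter (fun i => ∑ k, i k = l)
      = antidiagonalTuple c l := by
  ext i
  simp only [mem_filter, Fintype.mem_piFinset, mem_range, mem_antidiagonalTuple,
    and_iff_right_iff_imp]
  rintro rfl k
  exact Nat.lt_succ_of_le (single_le_sum (fun k _ => Nat.zero_le (i k)) (mem_univ k))

theorem sum_antidiagonalTuple_succ_comp_init {M : Type*} [AddCommMonoid M] (c l : ℕ)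
    (f : (Fin c → ℕ) → M) :
    ∑ i ∈ antidiagonalTuple (c + 1) l, f (Fin.init i)
      = ∑ t ∈ range (l + 1), ∑ j ∈ antidiagonalTuple c t, f j := by
  rw [sum_sigma']
  refine sum_nbij' (fun i => ⟨l - i (Fin.last c), Fin.init i⟩)
    (fun x => Fin.snoc x.2 (l - x.1)) ?_ ?_ ?_ ?_ (fun _ _ => rfl)
  all_goals
    intro x hx
    simp only [mem_sigma, mem_range, mem_antidiagonalTuple,
      Fin.sum_univ_castSucc, Fin.init, Fin.snoc_castSucc, Fin.snoc_last] at hx ⊢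
  · omega
  · omega
  · rw [show l - (l - x (Fin.last c)) = x (Fin.last c) by omega]
    exact Fin.snoc_init_self x
  · ext <;> simp [show l - (l - x.1) = x.1 by omega]

theorem fwdDiff_sum_range_succ {G : Type*} [AddCommGroup G] (g : ℕ → G) :
    Δ_[1] (fun l => ∑ t ∈ range (l + 1), g t) = fun l => g (l + 1) := by
  ext l
  simp [fwdDiff, sum_range_succ _ (l + 1)]

theorem fwdDiff_iter_sum_antidiagonalTuple_comp_castLE {G : Type*} [AddCommGroup G] {m : ℕ}
    (f : (Fin m → ℕ) → G) (e n : ℕ) :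
    (Δ_[1])^[e] (fun l => ∑ i ∈ antidiagonalTuple (m + e) l,
        f (fun j => i (Fin.castLE (m.le_add_right e) j))) n
      = ∑ j ∈ antidiagonalTuple m (n + e), f j := by
  induction e generalizing n with
  | zero => rfl
  | succ e ih =>
    have hsplit : (fun l => ∑ i ∈ antidiagonalTuple (m + (e + 1)) l,
          f (fun j => i (Fin.castLE (m.le_add_right (e + 1)) j)))
        = fun l => ∑ t ∈ range (l + 1), ∑ i ∈ antidiagonalTuple (m + e) t,
          f (fun j => i (Fin.castLE (m.le_add_right e) j)) :=
      funext fun l => sum_antidiagonalTuple_succ_comp_init (m + e) l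
        (fun i => f (fun j => i (Fin.castLE (m.le_add_right e) j)))
    rw [Function.iterate_succ_apply, hsplit, fwdDiff_sum_range_succ,
      fwdDiff_iter_comp_add (f := fun l => ∑ i ∈ antidiagonalTuple (m + e) l,
        f (fun j => i (Fin.castLE (m.le_add_right e) j))), ih, add_right_comm, add_assoc]

theorem fwdDiff_iter_pow_mul_eq {R : Type*} [CommRing R] {a b : R} (hab : a * b = 1)
    (s : ℕ → R) (k n : ℕ) :
    (Δ_[1])^[k] (fun l => a ^ l * s l) n
      = a ^ (n + k) * ∑ i ∈ range (k + 1), (k.choose i : R) * (-b) ^ i * s (n + k - i) := by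
  rw [fwdDiff_iter_eq_sum_shift, ← sum_range_reflect, mul_sum]
  refine sum_congr rfl fun i hi => ?_
  have hik : i ≤ k := Nat.lt_succ_iff.mp (mem_range.mp hi)
  have hpow : a ^ (n + k - i) = a ^ (n + k) * b ^ i := by
    rw [show n + k = n + k - i + i by omega, pow_add, mul_assoc, ← mul_pow, hab, one_pow,
      mul_one, Nat.add_sub_cancel]
  simp only [Nat.add_sub_cancel, smul_eq_mul, mul_one]
  rw [Nat.choose_symm hik, show n + (k - i) = n + k - i by omega, show k - (k - i) = i by omega,
    hpow, zsmul_eq_mul, neg_pow b]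
  push_cast
  ring

theorem error_representation_formula_general (d m p : ℕ) (hm1 : 1 ≤ m)
    (hmd : m ≤ d) (v : (Fin m → ℝ) → ℝ) (n : ℕ) :
    fdiff^[d - 1] (fun l =>
        ∑ i ∈ (Fintype.piFinset fun _ : Fin d => Finset.range (l + 1)).filter
            (fun i => ∑ k, i k = l),
          v (fun j : Fin m => ((1 : ℝ) / 2) ^ i (Fin.castLE hmd j)) *
            ((1 : ℝ) / 2) ^ (p * ∑ j : Fin m, i (Fin.castLE hmd j))) n
      = ((1 : ℝ) / 2) ^ (p * (n + d - 1)) *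
          ∑ i ∈ Finset.range m, (Nat.choose (m - 1) i : ℝ) * (-(2 : ℝ) ^ p) ^ i *
            ∑ jj ∈ (Fintype.piFinset fun _ : Fin m => Finset.range (n + d - 1 - i + 1)).filter
                (fun jj => ∑ k, jj k = n + d - 1 - i),
              v (fun t : Fin m => ((1 : ℝ) / 2) ^ jj t) := by
  obtain ⟨e, rfl⟩ := Nat.exists_eq_add_of_le hmd
  obtain ⟨k, rfl⟩ := Nat.exists_eq_add_of_le' hm1
  set s : ℕ → ℝ := fun l => ∑ j ∈ antidiagonalTuple (k + 1) l, v (fun t => ((1 : ℝ) / 2) ^ j t)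
  set w : (Fin (k + 1) → ℕ) → ℝ := fun j => v (fun t => ((1 : ℝ) / 2) ^ j t) *
    ((1 : ℝ) / 2) ^ (p * ∑ t, j t)
  have hweight : (fun l => ∑ j ∈ antidiagonalTuple (k + 1) l, w j)
      = fun l => (((1 : ℝ) / 2) ^ p) ^ l * s l := by
    ext l
    rw [mul_sum, ← pow_mul]
    refine sum_congr rfl fun j hj => ?_
    rw [mul_comm, ← mem_antidiagonalTuple.mp hj]
  have hab : ((1 : ℝ) / 2) ^ p * 2 ^ p = 1 := by rw [← mul_pow]; norm_num
  simp only [filter_piFinset_sum_eq_antidiagonalTuple, fdiff_eq_fwdDiff]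
  rw [show k + 1 + e - 1 = k + e by omega, Function.iterate_add_apply,
    funext (fwdDiff_iter_sum_antidiagonalTuple_comp_castLE w e),
    fwdDiff_iter_comp_add (f := fun l => ∑ j ∈ antidiagonalTuple (k + 1) l, w j), hweight,
    fwdDiff_iter_pow_mul_eq hab, ← pow_mul, Nat.add_sub_cancel,
    show n + (k + 1 + e) - 1 = n + e + k by omega]

/-- Error representation formula (Lemma `err-rep`):
for `F(n) = Σ_{|i|₁ = n, i ∈ ℕ^d} v(2^{-i_1},…,2^{-i_m}) 2^{-p(i_1+⋯+i_m)}` one has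
`δ^{d-1}F(n) = 2^{-p(n+d-1)} Σ_{i=0}^{m-1} binom(m-1,i) (-2^p)^i s_{n+d-1-i}` where
`s_l = Σ_{|j|₁ = l, j ∈ ℕ^m} v(2^{-j_1},…,2^{-j_m})`. -/
theorem error_representation_formula (d m p : ℕ) (hd : 1 ≤ d) (hm1 : 1 ≤ m)
    (hmd : m ≤ d) (hp : 1 ≤ p) (v : (Fin m → ℝ) → ℝ) (n : ℕ) :
    fdiff^[d - 1] (fun l =>
        ∑ i ∈ (Fintype.piFinset fun _ : Fin d => Finset.range (l + 1)).filter
            (fun i => ∑ k, i k = l),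
          v (fun j : Fin m => ((1 : ℝ) / 2) ^ i (Fin.castLE hmd j)) *
            ((1 : ℝ) / 2) ^ (p * ∑ j : Fin m, i (Fin.castLE hmd j))) n
      = ((1 : ℝ) / 2) ^ (p * (n + d - 1)) *
          ∑ i ∈ Finset.range m, (Nat.choose (m - 1) i : ℝ) * (-(2 : ℝ) ^ p) ^ i *
            ∑ jj ∈ (Fintype.piFinset fun _ : Fin m => Finset.range (n + d - 1 - i + 1)).filter
                (fun jj => ∑ k, jj k = n + d - 1 - i),
              v (fun t : Fin m => ((1 : ℝ) / 2) ^ jj t) :=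
  error_representation_formula_general d m p hm1 hmd v n
end
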